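/- Correctness of the Fair Re-ranking Greedy Algorithm: with the CPFair setup and adjusted scores Ŝ u i = S u i − λ₁·wC(u)·mc u i − λ₂·wP(item u i)·mp u i, if the selection T assigns to each user u a top-K set for Ŝ u (K positions with the largest adjusted scores), then T maximizes the fairness-aware objective F(A) = Σ_{u ∈ U} Σ_{i ∈ A u} S u i − λ₁·DCF(A) − λ₂·DPF(A) over all selections A; i.e., F(A) ≤ F(T) for every selection A. Thus the greedy algorithm returns an exact optimal solution of the mixed-integer program of Equation (3). -/
import Mathlib


/-! CPFair setup: users `U` partitioned into active `U₁` / inactive `U₂`,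
items `I` partitioned into short-head `I₁` / long-tail `I₂`, baseline scores
`S`, consumer metric `mc`, producer metric `mp`, and `item u i` the item at
position `i` of user `u`'s candidate list. -/

/-- Consumer weight: `1/|U₁|` for active users, `-1/|U₂|` for the rest. -/
noncomputable def wC {U : Type*} [DecidableEq U] (U₁ U₂ : Finset U) (u : U) : ℝ :=
  if u ∈ U₁ then 1 / (U₁.card : ℝ) else -(1 / (U₂.card : ℝ))

/-- Producer weight: `1/|I₁|` for short-head items, `-1/|I₂|` for the rest. -/
noncomputable def wP {I : Type*} [DecidableEq I] (I₁ I₂ : Finset I) (j : I) : ℝ :=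
  if j ∈ I₁ then 1 / (I₁.card : ℝ) else -(1 / (I₂.card : ℝ))

/-- Deviation from Consumer Fairness of a selection `A`. -/
noncomputable def DCF {U : Type*} {N : ℕ} (U₁ U₂ : Finset U)
    (mc : U → Fin N → ℝ) (A : U → Finset (Fin N)) : ℝ :=
  (∑ u ∈ U₁, ∑ i ∈ A u, mc u i) / (U₁.card : ℝ)
    - (∑ u ∈ U₂, ∑ i ∈ A u, mc u i) / (U₂.card : ℝ)

/-- Deviation from Producer Fairness of a selection `A`. -/
noncomputable def DPF {U I : Type*} [Fintype U] [DecidableEq I] {N : ℕ}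
    (I₁ I₂ : Finset I) (item : U → Fin N → I) (mp : U → Fin N → ℝ)
    (A : U → Finset (Fin N)) : ℝ :=
  (∑ u : U, ∑ i ∈ (A u).filter (fun i => item u i ∈ I₁), mp u i) / (I₁.card : ℝ)
    - (∑ u : U, ∑ i ∈ (A u).filter (fun i => item u i ∈ I₂), mp u i) / (I₂.card : ℝ)

/-- The fairness-aware objective `F(A) = ∑ S - λ₁·DCF(A) - λ₂·DPF(A)`. -/
noncomputable def Fobj {U I : Type*} [Fintype U] [DecidableEq I] {N : ℕ}
    (U₁ U₂ : Finset U) (I₁ I₂ : Finset I) (S mc mp : U → Fin N → ℝ)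
    (item : U → Fin N → I) (lam₁ lam₂ : ℝ) (A : U → Finset (Fin N)) : ℝ :=
  (∑ u : U, ∑ i ∈ A u, S u i) - lam₁ * DCF U₁ U₂ mc A - lam₂ * DPF I₁ I₂ item mp A

/-- The adjusted per-user-per-position score used by the greedy algorithm. -/
noncomputable def Shat {U I : Type*} [DecidableEq U] [DecidableEq I] {N : ℕ}
    (U₁ U₂ : Finset U) (I₁ I₂ : Finset I) (S mc mp : U → Fin N → ℝ)
    (item : U → Fin N → I) (lam₁ lam₂ : ℝ) (u : U) (i : Fin N) : ℝ :=
  S u i - lam₁ * wC U₁ U₂ u * mc u i - lam₂ * wP I₁ I₂ (item u i) * mp u i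


lemma topK_sum_le {N : ℕ} (s : Fin N → ℝ) (T A : Finset (Fin N))
    (hcard : A.card = T.card) (htop : ∀ i ∈ T, ∀ j ∉ T, s j ≤ s i) :
    ∑ i ∈ A, s i ≤ ∑ i ∈ T, s i := by
  have hA : ∑ i ∈ A, s i = ∑ i ∈ A ∩ T, s i + ∑ i ∈ A \ T, s i := by
    rw [Finset.sum_inter_add_sum_sdiff]
  have hT : ∑ i ∈ T, s i = ∑ i ∈ A ∩ T, s i + ∑ i ∈ T \ A, s i := by
    rw [Finset.inter_comm, Finset.sum_inter_add_sum_sdiff]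
  have hc : (A \ T).card = (T \ A).card := by
    have h1 := Finset.card_sdiff_add_card_inter A T
    have h2 := Finset.card_sdiff_add_card_inter T A
    rw [Finset.inter_comm T A] at h2
    omega
  rw [hA, hT]
  gcongr ?_ + ?_
  · exact le_refl _
  · rcases Finset.eq_empty_or_nonempty (T \ A) with h | h
    · have : A \ T = ∅ := Finset.card_eq_zero.mp (by rw [hc, h]; simp)
      simp [this, h]
    · set b := (T \ A).inf' h s with hb
      have h1 : ∑ i ∈ A \ T, s i ≤ (A \ T).card • b := by
        apply Finset.sum_le_card_nsmul
        intro x hx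
        obtain ⟨t, ht, hts⟩ := Finset.exists_mem_eq_inf' h s
        rw [hb, hts]
        exact htop t (Finset.mem_sdiff.mp ht).1 x (Finset.mem_sdiff.mp hx).2
      have h2 : (T \ A).card • b ≤ ∑ i ∈ T \ A, s i := by
        apply Finset.card_nsmul_le_sum
        intro x hx
        exact Finset.inf'_le s hx
      rw [hc] at h1
      exact h1.trans h2

lemma fobj_eq_sum_shat {U I : Type*} [Fintype U] [DecidableEq U] [Fintype I] [DecidableEq I]
    {N : ℕ} (U₁ U₂ : Finset U) (hUdisj : Disjoint U₁ U₂) (hUcover : U₁ ∪ U₂ = Finset.univ)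
    (I₁ I₂ : Finset I) (hIdisj : Disjoint I₁ I₂) (hIcover : I₁ ∪ I₂ = Finset.univ)
    (S mc mp : U → Fin N → ℝ) (item : U → Fin N → I) (lam₁ lam₂ : ℝ)
    (B : U → Finset (Fin N)) :
    Fobj U₁ U₂ I₁ I₂ S mc mp item lam₁ lam₂ B
      = ∑ u : U, ∑ i ∈ B u, Shat U₁ U₂ I₁ I₂ S mc mp item lam₁ lam₂ u i := by
  have hDCF : DCF U₁ U₂ mc B = ∑ u : U, ∑ i ∈ B u, wC U₁ U₂ u * mc u i := by
    rw [DCF, ← hUcover, Finset.sum_union hUdisj]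
    have e1 : ∀ u ∈ U₁, ∑ i ∈ B u, wC U₁ U₂ u * mc u i
        = (1 / (U₁.card : ℝ)) * ∑ i ∈ B u, mc u i := by
      intro u hu
      rw [Finset.mul_sum]
      exact Finset.sum_congr rfl fun i _ => by rw [wC, if_pos hu]
    have e2 : ∀ u ∈ U₂, ∑ i ∈ B u, wC U₁ U₂ u * mc u i
        = -((1 / (U₂.card : ℝ)) * ∑ i ∈ B u, mc u i) := by
      intro u hu
      rw [Finset.mul_sum, ← Finset.sum_neg_distrib]
      refine Finset.sum_congr rfl fun i _ => ?_
      rw [wC, if_neg (fun h => (Finset.disjoint_left.mp hUdisj) h hu)]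
      ring
    rw [Finset.sum_congr rfl e1, Finset.sum_congr rfl e2]
    rw [Finset.sum_neg_distrib, ← Finset.mul_sum, ← Finset.mul_sum]
    ring
  have hDPF : DPF I₁ I₂ item mp B = ∑ u : U, ∑ i ∈ B u, wP I₁ I₂ (item u i) * mp u i := by
    rw [DPF]
    have key : ∀ u : U, ∑ i ∈ B u, wP I₁ I₂ (item u i) * mp u i
        = (∑ i ∈ (B u).filter (fun i => item u i ∈ I₁), mp u i) / (I₁.card : ℝ)
          - (∑ i ∈ (B u).filter (fun i => item u i ∈ I₂), mp u i) / (I₂.card : ℝ) := by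
      intro u
      have hsplit := Finset.sum_filter_add_sum_filter_not (B u)
        (fun i => item u i ∈ I₁) (fun i => wP I₁ I₂ (item u i) * mp u i)
      have hfe : (B u).filter (fun i => ¬ item u i ∈ I₁)
          = (B u).filter (fun i => item u i ∈ I₂) := by
        refine Finset.filter_congr fun i _ => ?_
        constructor
        · intro h
          have : item u i ∈ I₁ ∪ I₂ := by rw [hIcover]; exact Finset.mem_univ _
          simpa [Finset.mem_union, h] using this
        · intro h h1
          exact (Finset.disjoint_left.mp hIdisj) h1 h
      rw [hfe] at hsplit
      rw [← hsplit]
      have e1 : ∑ i ∈ (B u).filter (fun i => item u i ∈ I₁),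
          wP I₁ I₂ (item u i) * mp u i
          = ∑ i ∈ (B u).filter (fun i => item u i ∈ I₁), (1 / (I₁.card : ℝ)) * mp u i := by
        refine Finset.sum_congr rfl fun i hi => ?_
        rw [wP, if_pos (Finset.mem_filter.mp hi).2]
      have e2 : ∑ i ∈ (B u).filter (fun i => item u i ∈ I₂),
          wP I₁ I₂ (item u i) * mp u i
          = ∑ i ∈ (B u).filter (fun i => item u i ∈ I₂), -((1 / (I₂.card : ℝ)) * mp u i) := by
        refine Finset.sum_congr rfl fun i hi => ?_
        have h2 := (Finset.mem_filter.mp hi).2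
        rw [wP, if_neg (fun h => (Finset.disjoint_left.mp hIdisj) h h2)]
        ring
      rw [e1, e2, ← Finset.mul_sum, Finset.sum_neg_distrib, ← Finset.mul_sum]
      ring
    rw [Finset.sum_congr rfl (fun u _ => key u)]
    rw [Finset.sum_sub_distrib, ← Finset.sum_div, ← Finset.sum_div]
  rw [Fobj, hDCF, hDPF, Finset.mul_sum, Finset.mul_sum]
  rw [← Finset.sum_sub_distrib, ← Finset.sum_sub_distrib]
  refine Finset.sum_congr rfl fun u _ => ?_
  rw [Finset.mul_sum, Finset.mul_sum, ← Finset.sum_sub_distrib, ← Finset.sum_sub_distrib]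
  refine Finset.sum_congr rfl fun i _ => ?_
  rw [Shat]; ring

/-- Correctness of the Fair Re-ranking Greedy Algorithm: if for each user `u`
the set `T u` is a top-K set for the adjusted scores `Ŝ u`, then `T`
maximizes the fairness-aware objective `F` over all selections. -/
theorem greedy_algorithm_correct (U : Type*) [Fintype U] [DecidableEq U] (I : Type*) [Fintype I] [DecidableEq I]
    (N K : ℕ) (hK : K ≤ N)
    (U₁ U₂ : Finset U) (hU₁ : U₁.Nonempty) (hU₂ : U₂.Nonempty)
    (hUdisj : Disjoint U₁ U₂) (hUcover : U₁ ∪ U₂ = Finset.univ)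
    (I₁ I₂ : Finset I) (hI₁ : I₁.Nonempty) (hI₂ : I₂.Nonempty)
    (hIdisj : Disjoint I₁ I₂) (hIcover : I₁ ∪ I₂ = Finset.univ)
    (S mc mp : U → Fin N → ℝ) (item : U → Fin N → I) (lam₁ lam₂ : ℝ)
    (T : U → Finset (Fin N)) (hTcard : ∀ u, (T u).card = K)
    (hTtop : ∀ u, ∀ i ∈ T u, ∀ j ∉ T u,
      Shat U₁ U₂ I₁ I₂ S mc mp item lam₁ lam₂ u j
        ≤ Shat U₁ U₂ I₁ I₂ S mc mp item lam₁ lam₂ u i)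
    (A : U → Finset (Fin N)) (hA : ∀ u, (A u).card = K) :
    Fobj U₁ U₂ I₁ I₂ S mc mp item lam₁ lam₂ A
      ≤ Fobj U₁ U₂ I₁ I₂ S mc mp item lam₁ lam₂ T := by
  rw [fobj_eq_sum_shat U₁ U₂ hUdisj hUcover I₁ I₂ hIdisj hIcover S mc mp item lam₁ lam₂ A,
    fobj_eq_sum_shat U₁ U₂ hUdisj hUcover I₁ I₂ hIdisj hIcover S mc mp item lam₁ lam₂ T]
  refine Finset.sum_le_sum fun u _ => ?_
  exact topK_sum_le _ (T u) (A u) ((hA u).trans (hTcard u).symm) (hTtop u)
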